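/- arXiv:2503.07875 — 10 statements merged into one kernel-verified Lean document; each statement's English description precedes it below -/
import Mathlib

section
/- Let S_h, E_h, I_h, R_h, S_v, E_v, I_v be real numbers satisfying the equilibrium equations of the dimensionless non-delayed dengue model, with 1 + I_v ≠ 0, 1 + I_h ≠ 0, σ_h·ξ_h·η_h − α₁·ω ≠ 0, and suppose b_{1h}S_h(σ_hξ_hη_h − α₁ω) − σ_hξ_hη_h(1 − S_h) ≠ 0. Then I_v = σ_hξ_hη_h(1 − S_h) / (b_{1h}S_h(σ_hξ_hη_h − α₁ω) − σ_hξ_hη_h(1 − S_h)). -/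
/-- At an equilibrium of the dimensionless non-delayed dengue model,
the infectious vector component `I_v` can be expressed in terms of `S_h`. -/
theorem equilibrium_Iv
    (ω b1h α1 σh ξh ηh b1v c1v α2 c2v : ℝ)
    (hω : 0 < ω) (hb1h : 0 < b1h) (hα1 : 0 < α1) (hσ : 0 < σh) (hξ : 0 < ξh)
    (hη : 0 < ηh) (hb1v : 0 < b1v) (hc1 : 0 < c1v) (hα2 : 0 < α2) (hc2 : 0 < c2v)
    (Sh Eh Ih Rh Sv Ev Iv : ℝ)
    (hIv : 1 + Iv ≠ 0) (hIh : 1 + Ih ≠ 0)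
    (hden : σh * ξh * ηh - α1 * ω ≠ 0)
    (hden2 : b1h * Sh * (σh * ξh * ηh - α1 * ω) - σh * ξh * ηh * (1 - Sh) ≠ 0)
    (heq1 : 1 + ω * Rh - (b1h * Iv / (1 + Iv)) * Sh - Sh = 0)
    (heq2 : α1 * (b1h * Iv / (1 + Iv)) * Sh - σh * Eh = 0)
    (heq3 : Eh - ξh * Ih = 0)
    (heq4 : Ih - ηh * Rh = 0)
    (heq5 : 1 - (b1v * Ih / (1 + Ih)) * Sv - c1v * Sv = 0)
    (heq6 : α2 * (b1v * Ih / (1 + Ih)) * Sv - c2v * Ev = 0)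
    (heq7 : Ev - c1v * Iv = 0) :
    Iv = σh * ξh * ηh * (1 - Sh) /
      (b1h * Sh * (σh * ξh * ηh - α1 * ω) - σh * ξh * ηh * (1 - Sh)) := by
  rw [eq_div_iff hden2]
  field_simp at heq1 heq2
  have hE : Eh = ξh * Ih := by linarith
  have hI : Ih = ηh * Rh := by linarith
  subst hE hI
  linear_combination (-(σh*ξh*ηh)) * heq1 - ω * heq2
end

section
/- Let S_h, E_h, I_h, R_h, S_v, E_v, I_v be real numbers satisfying the equilibrium equations of the dimensionless non-delayed dengue model, with 1 + I_v ≠ 0, 1 + I_h ≠ 0, σ_h·ξ_h·η_h − α₁·ω ≠ 0, and suppose c_{1v}(σ_hξ_hη_h − α₁ω) + η_hα₁(c_{1v} + b_{1v})(1 − S_h) ≠ 0. Then S_v = (σ_hξ_hη_h − α₁ω + η_hα₁(1 − S_h)) / (c_{1v}(σ_hξ_hη_h − α₁ω) + η_hα₁(c_{1v} + b_{1v})(1 − S_h)). -/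
/-- At an equilibrium of the dimensionless non-delayed dengue model,
the susceptible vector component `S_v` can be expressed in terms of `S_h`. -/
theorem equilibrium_Sv
    (ω b1h α1 σh ξh ηh b1v c1v α2 c2v : ℝ)
    (hω : 0 < ω) (hb1h : 0 < b1h) (hα1 : 0 < α1) (hσ : 0 < σh) (hξ : 0 < ξh)
    (hη : 0 < ηh) (hb1v : 0 < b1v) (hc1 : 0 < c1v) (hα2 : 0 < α2) (hc2 : 0 < c2v)
    (Sh Eh Ih Rh Sv Ev Iv : ℝ)
    (hIv : 1 + Iv ≠ 0) (hIh : 1 + Ih ≠ 0)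
    (hden : σh * ξh * ηh - α1 * ω ≠ 0)
    (hden2 : c1v * (σh * ξh * ηh - α1 * ω) + ηh * α1 * (c1v + b1v) * (1 - Sh) ≠ 0)
    (heq1 : 1 + ω * Rh - (b1h * Iv / (1 + Iv)) * Sh - Sh = 0)
    (heq2 : α1 * (b1h * Iv / (1 + Iv)) * Sh - σh * Eh = 0)
    (heq3 : Eh - ξh * Ih = 0)
    (heq4 : Ih - ηh * Rh = 0)
    (heq5 : 1 - (b1v * Ih / (1 + Ih)) * Sv - c1v * Sv = 0)
    (heq6 : α2 * (b1v * Ih / (1 + Ih)) * Sv - c2v * Ev = 0)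
    (heq7 : Ev - c1v * Iv = 0) :
    Sv = (σh * ξh * ηh - α1 * ω + ηh * α1 * (1 - Sh)) /
      (c1v * (σh * ξh * ηh - α1 * ω) + ηh * α1 * (c1v + b1v) * (1 - Sh)) := by
  have hI : Ih * (σh * ξh * ηh - α1 * ω) = ηh * (α1 * (1 - Sh)) := by
    linear_combination -(ηh * α1) * heq1 - ηh * heq2 - ηh * σh * heq3 -
      α1 * ω * heq4
  have h5 : (1 + Ih) - b1v * Ih * Sv - c1v * Sv * (1 + Ih) = 0 := by
    have := mul_eq_zero_of_left heq5 (1 + Ih)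
    field_simp at this
    linarith
  rw [eq_div_iff hden2]
  linear_combination (1 - (c1v + b1v) * Sv) * hI - (σh * ξh * ηh - α1 * ω) * h5
end

section
/- Let F be the 4×4 real matrix with rows [0, 0, 0, α₁b_{1h}], [0, 0, 0, 0], [0, α₂b_{1v}/c_{1v}, 0, 0], [0, 0, 0, 0], and let V be the 4×4 real matrix with rows [σ_h, 0, 0, 0], [−1, ξ_h, 0, 0], [0, 0, c_{2v}, 0], [0, 0, −1, c_{1v}], where all the parameters α₁, α₂, b_{1h}, b_{1v}, σ_h, ξ_h, c_{1v}, c_{2v} are positive. Then V is invertible and the characteristic polynomial of F·V⁻¹ equals X⁴ − R₀²·X², where R₀² = α₁α₂b_{1h}b_{1v}/(σ_hξ_hc_{2v}c_{1v}²). In particular, the spectral radius of F·V⁻¹ is R₀ = √(α₁α₂b_{1h}b_{1v}/(σ_hξ_hc_{2v}c_{1v}²)). -/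
open Polynomial

private lemma my_det_fin_four {R : Type*} [CommRing R] (A : Matrix (Fin 4) (Fin 4) R) :
    A.det =
      A 0 0 * (A 1 1 * (A 2 2 * A 3 3 - A 2 3 * A 3 2)
              - A 1 2 * (A 2 1 * A 3 3 - A 2 3 * A 3 1)
              + A 1 3 * (A 2 1 * A 3 2 - A 2 2 * A 3 1))
    - A 0 1 * (A 1 0 * (A 2 2 * A 3 3 - A 2 3 * A 3 2)
              - A 1 2 * (A 2 0 * A 3 3 - A 2 3 * A 3 0)
              + A 1 3 * (A 2 0 * A 3 2 - A 2 2 * A 3 0))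
    + A 0 2 * (A 1 0 * (A 2 1 * A 3 3 - A 2 3 * A 3 1)
              - A 1 1 * (A 2 0 * A 3 3 - A 2 3 * A 3 0)
              + A 1 3 * (A 2 0 * A 3 1 - A 2 1 * A 3 0))
    - A 0 3 * (A 1 0 * (A 2 1 * A 3 2 - A 2 2 * A 3 1)
              - A 1 1 * (A 2 0 * A 3 2 - A 2 2 * A 3 0)
              + A 1 2 * (A 2 0 * A 3 1 - A 2 1 * A 3 0)) := by
  rw [Matrix.det_succ_row_zero]
  simp [Fin.sum_univ_four, Matrix.det_fin_three, Fin.succAbove_of_castSucc_lt,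
    Fin.succAbove_of_lt_succ, Fin.succAbove_zero, Fin.succAbove_last]
  ring

private lemma spec_iff_root (M : Matrix (Fin 4) (Fin 4) ℝ) (μ : ℝ) :
    μ ∈ spectrum ℝ M ↔ M.charpoly.IsRoot μ := by
  rw [spectrum.mem_iff, Matrix.isUnit_iff_isUnit_det]
  have h1 : ((algebraMap ℝ (Matrix (Fin 4) (Fin 4) ℝ)) μ - M).det = M.charpoly.eval μ := by
    rw [Matrix.charpoly, Polynomial.eval, ← Polynomial.coe_eval₂RingHom, RingHom.map_det]
    congr 1
    ext i j
    by_cases h : i = j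
    · subst h; simp [Matrix.charmatrix_apply_eq, Matrix.algebraMap_matrix_apply]
    · simp [Matrix.charmatrix_apply_ne _ _ _ h, Matrix.algebraMap_matrix_apply, h]
  rw [h1, isUnit_iff_ne_zero, not_ne_iff, Polynomial.IsRoot]

set_option maxHeartbeats 1000000 in
/-- **next-generation matrix.** With `F` the transmission matrix and `V`
the transition matrix of the dengue model at the disease-free equilibrium, `V` is
invertible, the characteristic polynomial of `F·V⁻¹` is `X⁴ − R₀²·X²`, and the
spectral radius of `F·V⁻¹` equals `R₀ = √(α₁α₂b_{1h}b_{1v}/(σ_hξ_hc_{2v}c_{1v}²))`. -/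
theorem next_generation_matrix_R0
    (α1 α2 b1h b1v σh ξh c1v c2v : ℝ)
    (hα1 : 0 < α1) (hα2 : 0 < α2) (hb1h : 0 < b1h) (hb1v : 0 < b1v)
    (hσ : 0 < σh) (hξ : 0 < ξh) (hc1 : 0 < c1v) (hc2 : 0 < c2v)
    (F V : Matrix (Fin 4) (Fin 4) ℝ)
    (hF : F = !![0, 0, 0, α1 * b1h;
                 0, 0, 0, 0;
                 0, α2 * b1v / c1v, 0, 0;
                 0, 0, 0, 0])
    (hV : V = !![σh, 0, 0, 0;
                 -1, ξh, 0, 0;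
                 0, 0, c2v, 0;
                 0, 0, -1, c1v]) :
    IsUnit V.det ∧
    (F * V⁻¹).charpoly =
      X ^ 4 - C (α1 * α2 * b1h * b1v / (σh * ξh * c2v * c1v ^ 2)) * X ^ 2 ∧
    sSup ((fun z : ℝ => |z|) '' spectrum ℝ (F * V⁻¹)) =
      Real.sqrt (α1 * α2 * b1h * b1v / (σh * ξh * c2v * c1v ^ 2)) := by
  subst hF hV
  set r : ℝ := α1 * α2 * b1h * b1v / (σh * ξh * c2v * c1v ^ 2) with hr_def
  have hrpos : 0 < r := by positivity
  set W : Matrix (Fin 4) (Fin 4) ℝ :=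
    !![1/σh, 0, 0, 0;
       1/(σh*ξh), 1/ξh, 0, 0;
       0, 0, 1/c2v, 0;
       0, 0, 1/(c2v*c1v), 1/c1v] with hW_def
  have hVW : (!![σh, 0, 0, 0; -1, ξh, 0, 0; 0, 0, c2v, 0; 0, 0, -1, c1v] :
      Matrix (Fin 4) (Fin 4) ℝ) * W = 1 := by
    ext i j
    fin_cases i <;> fin_cases j
    all_goals
      simp only [hW_def, Matrix.mul_apply, Fin.sum_univ_four, Matrix.one_apply, Matrix.cons_val',
        Matrix.cons_val_zero, Matrix.cons_val_one, Matrix.head_cons, Matrix.empty_val',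
        Matrix.cons_val_fin_one, Matrix.cons_val_two, Matrix.cons_val_three,
        Matrix.vecHead, Matrix.vecTail, Matrix.of_apply, Function.comp]
    all_goals norm_num [Fin.ext_iff, Fin.succ]
    all_goals field_simp
    all_goals norm_num [Matrix.vecHead, Matrix.vecTail]
  have hinv : (!![σh, 0, 0, 0; -1, ξh, 0, 0; 0, 0, c2v, 0; 0, 0, -1, c1v] :
      Matrix (Fin 4) (Fin 4) ℝ)⁻¹ = W :=
    Matrix.inv_eq_right_inv hVW
  have hdetunit : IsUnit (!![σh, 0, 0, 0; -1, ξh, 0, 0; 0, 0, c2v, 0; 0, 0, -1, c1v] :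
      Matrix (Fin 4) (Fin 4) ℝ).det := by
    rw [isUnit_iff_ne_zero, my_det_fin_four]
    simp only [Matrix.cons_val', Matrix.cons_val_zero, Matrix.cons_val_one, Matrix.head_cons,
      Matrix.empty_val', Matrix.cons_val_fin_one, Matrix.cons_val_two, Matrix.cons_val_three,
      Matrix.vecHead, Matrix.vecTail, Matrix.of_apply, Function.comp]
    simp [Matrix.vecHead, Matrix.vecTail, Function.comp, Matrix.head_fin_const]
    exact ⟨hσ.ne', hξ.ne', hc2.ne', hc1.ne'⟩
  have hM : (!![0, 0, 0, α1 * b1h; 0, 0, 0, 0; 0, α2 * b1v / c1v, 0, 0; 0, 0, 0, 0] :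
      Matrix (Fin 4) (Fin 4) ℝ) * W =
      !![0, 0, α1*b1h/(c2v*c1v), α1*b1h/c1v;
         0, 0, 0, 0;
         α2*b1v/c1v/(σh*ξh), α2*b1v/c1v/ξh, 0, 0;
         0, 0, 0, 0] := by
    ext i j
    fin_cases i <;> fin_cases j
    all_goals
      simp only [hW_def, Matrix.mul_apply, Fin.sum_univ_four, Matrix.cons_val',
        Matrix.cons_val_zero, Matrix.cons_val_one, Matrix.head_cons, Matrix.empty_val',
        Matrix.cons_val_fin_one, Matrix.cons_val_two, Matrix.cons_val_three,
        Matrix.vecHead, Matrix.vecTail, Matrix.of_apply, Function.comp]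
    all_goals norm_num [Matrix.vecHead, Matrix.vecTail, Fin.succ]
    all_goals try ring
  have hac : α1*b1h/(c2v*c1v) * (α2*b1v/c1v/(σh*ξh)) = r := by
    rw [hr_def]; field_simp
  have hcp : ((!![0, 0, 0, α1 * b1h; 0, 0, 0, 0; 0, α2 * b1v / c1v, 0, 0; 0, 0, 0, 0] :
      Matrix (Fin 4) (Fin 4) ℝ) *
      (!![σh, 0, 0, 0; -1, ξh, 0, 0; 0, 0, c2v, 0; 0, 0, -1, c1v] :
      Matrix (Fin 4) (Fin 4) ℝ)⁻¹).charpoly = X ^ 4 - C r * X ^ 2 := by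
    rw [hinv, hM, Matrix.charpoly, my_det_fin_four, ← hac]
    simp only [Matrix.charmatrix_apply, Matrix.one_apply, Matrix.cons_val', Matrix.cons_val_zero,
      Matrix.cons_val_one, Matrix.head_cons, Matrix.empty_val', Matrix.cons_val_fin_one,
      Matrix.cons_val_two, Matrix.cons_val_three, Matrix.vecHead, Matrix.vecTail,
      Matrix.of_apply, Function.comp, map_mul, map_zero, Matrix.diagonal_apply]
    simp (config := { decide := true }) [Matrix.vecHead, Matrix.vecTail, Function.comp,
      Matrix.head_fin_const]
    ring
  refine ⟨hdetunit, hcp, ?_⟩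
  set s := Real.sqrt r with hs_def
  have hs2 : s ^ 2 = r := Real.sq_sqrt hrpos.le
  have hspos : 0 < s := Real.sqrt_pos.mpr hrpos
  have hspec : spectrum ℝ ((!![0, 0, 0, α1 * b1h; 0, 0, 0, 0; 0, α2 * b1v / c1v, 0, 0; 0, 0, 0, 0] :
      Matrix (Fin 4) (Fin 4) ℝ) *
      (!![σh, 0, 0, 0; -1, ξh, 0, 0; 0, 0, c2v, 0; 0, 0, -1, c1v] :
      Matrix (Fin 4) (Fin 4) ℝ)⁻¹) = {0, s, -s} := by
    ext x
    rw [spec_iff_root, hcp, Polynomial.IsRoot]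
    have hfac : x ^ 4 - r * x ^ 2 = x ^ 2 * ((x - s) * (x + s)) := by
      rw [← hs2]; ring
    simp only [Polynomial.eval_sub, Polynomial.eval_mul, Polynomial.eval_pow,
      Polynomial.eval_C, Polynomial.eval_X, hfac, mul_eq_zero,
      pow_eq_zero_iff (two_ne_zero (α := ℕ)),
      sub_eq_zero, add_eq_zero_iff_eq_neg, Set.mem_insert_iff, Set.mem_singleton_iff]
    try tauto
  rw [hspec]
  have himg : (fun z : ℝ => |z|) '' {0, s, -s} = {0, s} := by
    simp [Set.image_insert_eq, abs_of_nonneg hspos.le, abs_neg, Set.insert_comm,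
      Set.pair_eq_singleton]
  rw [himg, csSup_pair, sup_eq_right.mpr hspos.le]
end

section
/- Assume all parameters ω, b_{1h}, α₁, σ_h, ξ_h, η_h, b_{1v}, c_{1v}, α₂, c_{2v} are positive, σ_hξ_hη_h > α₁ω, and R₀ > 1. Define λ_h* = (η_hσ_hξ_hA₅/(A₁A₄ + A₂A₅))·(R₀² − 1) and λ_v* = A₁λ_h*/(A₂λ_h* + η_hσ_hξ_h). Then λ_h* > 0, λ_v* > 0, and all seven components of the endemic equilibrium D* are strictly positive, where S_h* = η_hξ_hσ_h/((η_hσ_hξ_h − ωα₁)λ_h* + η_hσ_hξ_h), E_h* = η_hξ_hα₁λ_h*/((η_hσ_hξ_h − ωα₁)λ_h* + η_hσ_hξ_h), I_h* = η_hα₁λ_h*/((η_hσ_hξ_h − ωα₁)λ_h* + η_hσ_hξ_h), R_h* = α₁λ_h*/((η_hσ_hξ_h − ωα₁)λ_h* + η_hσ_hξ_h), S_v* = 1/(λ_v* + c_{1v}), E_v* = α₂λ_v*/(c_{2v}(λ_v* + c_{1v})), and I_v* = α₂λ_v*/(c_{2v}c_{1v}(λ_v* + c_{1v})). -/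
/-- **existence of a positive endemic equilibrium when `R₀ > 1`.**
If `σ_hξ_hη_h > α₁ω` and `R₀ > 1`, then `λ_h* > 0`, `λ_v* > 0` and all seven
components of the endemic equilibrium `D*` are strictly positive. -/
theorem endemic_equilibrium_positive
    (ω b1h α1 σh ξh ηh b1v c1v α2 c2v : ℝ)
    (hω : 0 < ω) (hb1h : 0 < b1h) (hα1 : 0 < α1) (hσ : 0 < σh) (hξ : 0 < ξh)
    (hη : 0 < ηh) (hb1v : 0 < b1v) (hc1 : 0 < c1v) (hα2 : 0 < α2) (hc2 : 0 < c2v)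
    (A1 A2 A3 A4 A5 R0 : ℝ)
    (hA1 : A1 = b1v * α1 * ηh)
    (hA2 : A2 = ηh * σh * ξh + ηh * α1 - ω * α1)
    (hA3 : A3 = b1h * α2)
    (hA4 : A4 = c1v * c2v + α2)
    (hA5 : A5 = c2v * c1v ^ 2)
    (hR0 : R0 = Real.sqrt (A1 * A3 / (ηh * σh * ξh * A5)))
    (hcond : α1 * ω < σh * ξh * ηh)
    (hR0gt : 1 < R0)
    (lamh lamv Sh Eh Ih Rh Sv Ev Iv : ℝ)
    (hlamh : lamh = (ηh * σh * ξh * A5 / (A1 * A4 + A2 * A5)) * (R0 ^ 2 - 1))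
    (hlamv : lamv = A1 * lamh / (A2 * lamh + ηh * σh * ξh))
    (hSh : Sh = ηh * ξh * σh / ((ηh * σh * ξh - ω * α1) * lamh + ηh * σh * ξh))
    (hEh : Eh = ηh * ξh * α1 * lamh / ((ηh * σh * ξh - ω * α1) * lamh + ηh * σh * ξh))
    (hIh : Ih = ηh * α1 * lamh / ((ηh * σh * ξh - ω * α1) * lamh + ηh * σh * ξh))
    (hRh : Rh = α1 * lamh / ((ηh * σh * ξh - ω * α1) * lamh + ηh * σh * ξh))
    (hSv : Sv = 1 / (lamv + c1v))
    (hEv : Ev = α2 * lamv / (c2v * (lamv + c1v)))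
    (hIv : Iv = α2 * lamv / (c2v * c1v * (lamv + c1v))) :
    0 < lamh ∧ 0 < lamv ∧ 0 < Sh ∧ 0 < Eh ∧ 0 < Ih ∧ 0 < Rh ∧
    0 < Sv ∧ 0 < Ev ∧ 0 < Iv := by
  have hA1p : 0 < A1 := by rw [hA1]; positivity
  have hA2p : 0 < A2 := by rw [hA2]; nlinarith
  have hA5p : 0 < A5 := by rw [hA5]; positivity
  have hA4p : 0 < A4 := by rw [hA4]; positivity
  have hden : 0 < A1 * A4 + A2 * A5 := by positivity
  have hR2 : 0 < R0 ^ 2 - 1 := by nlinarith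
  have hlh : 0 < lamh := by rw [hlamh]; positivity
  have hlvden : 0 < A2 * lamh + ηh * σh * ξh := by positivity
  have hlv : 0 < lamv := by rw [hlamv]; positivity
  have hhden : 0 < (ηh * σh * ξh - ω * α1) * lamh + ηh * σh * ξh := by
    have h0 : ηh * σh * ξh - ω * α1 = σh * ξh * ηh - α1 * ω := by ring
    have : 0 < ηh * σh * ξh - ω * α1 := by rw [h0]; linarith
    positivity
  refine ⟨hlh, hlv, ?_, ?_, ?_, ?_, ?_, ?_, ?_⟩
  · rw [hSh]; positivity
  · rw [hEh]; positivity
  · rw [hIh]; positivity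
  · rw [hRh]; positivity
  · rw [hSv]; positivity
  · rw [hEv]; positivity
  · rw [hIv]; positivity
end

section
/- Assume all parameters ω, b_{1h}, α₁, σ_h, ξ_h, η_h, b_{1v}, c_{1v}, α₂, c_{2v} are positive and σ_hξ_hη_h > α₁ω. Let λ_h > 0 and λ_v > 0 be real numbers satisfying λ_v = A₁λ_h/(A₂λ_h + η_hσ_hξ_h) and λ_h = A₃λ_v/(A₄λ_v + A₅). Then the point with components S_h* = η_hξ_hσ_h/((η_hσ_hξ_h − ωα₁)λ_h + η_hσ_hξ_h), E_h* = η_hξ_hα₁λ_h/((η_hσ_hξ_h − ωα₁)λ_h + η_hσ_hξ_h), I_h* = η_hα₁λ_h/((η_hσ_hξ_h − ωα₁)λ_h + η_hσ_hξ_h), R_h* = α₁λ_h/((η_hσ_hξ_h − ωα₁)λ_h + η_hσ_hξ_h), S_v* = 1/(λ_v + c_{1v}), E_v* = α₂λ_v/(c_{2v}(λ_v + c_{1v})), I_v* = α₂λ_v/(c_{2v}c_{1v}(λ_v + c_{1v})) satisfies all seven equilibrium equations of the dimensionless non-delayed dengue model, and moreover λ_h = b_{1h}I_v*/(1 + I_v*)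 and λ_v = b_{1v}I_h*/(1 + I_h*). -/
set_option maxHeartbeats 2000000


/-- If `λ_h, λ_v > 0` satisfy the two fixed-point relations, then the
point `D* = (S_h*, E_h*, I_h*, R_h*, S_v*, E_v*, I_v*)` defined by the explicit formulas
satisfies all seven equilibrium equations of the dimensionless non-delayed dengue model,
and the forces of infection are recovered: `λ_h = b_{1h}I_v*/(1+I_v*)` and
`λ_v = b_{1v}I_h*/(1+I_h*)`. -/
theorem endemic_equilibrium_satisfies_equations
    (ω b1h α1 σh ξh ηh b1v c1v α2 c2v : ℝ)
    (hω : 0 < ω) (hb1h : 0 < b1h) (hα1 : 0 < α1) (hσ : 0 < σh) (hξ : 0 < ξh)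
    (hη : 0 < ηh) (hb1v : 0 < b1v) (hc1 : 0 < c1v) (hα2 : 0 < α2) (hc2 : 0 < c2v)
    (A1 A2 A3 A4 A5 : ℝ)
    (hA1 : A1 = b1v * α1 * ηh)
    (hA2 : A2 = ηh * σh * ξh + ηh * α1 - ω * α1)
    (hA3 : A3 = b1h * α2)
    (hA4 : A4 = c1v * c2v + α2)
    (hA5 : A5 = c2v * c1v ^ 2)
    (hcond : α1 * ω < σh * ξh * ηh)
    (lamh lamv : ℝ) (hlamh : 0 < lamh) (hlamv : 0 < lamv)
    (hrel1 : lamv = A1 * lamh / (A2 * lamh + ηh * σh * ξh))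
    (hrel2 : lamh = A3 * lamv / (A4 * lamv + A5))
    (Sh Eh Ih Rh Sv Ev Iv : ℝ)
    (hSh : Sh = ηh * ξh * σh / ((ηh * σh * ξh - ω * α1) * lamh + ηh * σh * ξh))
    (hEh : Eh = ηh * ξh * α1 * lamh / ((ηh * σh * ξh - ω * α1) * lamh + ηh * σh * ξh))
    (hIh : Ih = ηh * α1 * lamh / ((ηh * σh * ξh - ω * α1) * lamh + ηh * σh * ξh))
    (hRh : Rh = α1 * lamh / ((ηh * σh * ξh - ω * α1) * lamh + ηh * σh * ξh))
    (hSv : Sv = 1 / (lamv + c1v))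
    (hEv : Ev = α2 * lamv / (c2v * (lamv + c1v)))
    (hIv : Iv = α2 * lamv / (c2v * c1v * (lamv + c1v))) :
    (1 + ω * Rh - lamh * Sh - Sh = 0) ∧
    (α1 * lamh * Sh - σh * Eh = 0) ∧
    (Eh - ξh * Ih = 0) ∧
    (Ih - ηh * Rh = 0) ∧
    (1 - lamv * Sv - c1v * Sv = 0) ∧
    (α2 * lamv * Sv - c2v * Ev = 0) ∧
    (Ev - c1v * Iv = 0) ∧
    lamh = b1h * Iv / (1 + Iv) ∧
    lamv = b1v * Ih / (1 + Ih) := by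

  have hD : 0 < (ηh * σh * ξh - ω * α1) * lamh + ηh * σh * ξh := by
    have h1 : 0 < ηh * σh * ξh - ω * α1 := by nlinarith
    have h2 : 0 < ηh * σh * ξh := by positivity
    nlinarith
  have hDne : (ηh * σh * ξh - ω * α1) * lamh + ηh * σh * ξh ≠ 0 := ne_of_gt hD
  have hV : 0 < lamv + c1v := by linarith
  have hVne : lamv + c1v ≠ 0 := ne_of_gt hV
  have hc1ne := hc1.ne'
  have hc2ne := hc2.ne'
  have hDen1 : 0 < A2 * lamh + ηh * σh * ξh := by
    rw [hA2]
    have h1 : 0 < (ηh * σh * ξh + ηh * α1 - ω * α1) * lamh := by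
      apply mul_pos _ hlamh
      nlinarith [mul_pos hη hα1]
    nlinarith [mul_pos (mul_pos hη hσ) hξ]
  have hDen2 : 0 < A4 * lamv + A5 := by
    rw [hA4, hA5]; positivity
  subst hSh hEh hIh hRh hSv hEv hIv
  refine ⟨?_, ?_, ?_, ?_, ?_, ?_, ?_, ?_, ?_⟩
  · rw [eq_comm, ← mul_right_inj' hDne]; field_simp; ring
  · field_simp; ring
  · field_simp; ring
  · field_simp; ring
  · field_simp; ring
  · field_simp; ring
  · field_simp; ring
  · rw [hrel2, hA3, hA4, hA5]
    rw [eq_div_iff (by positivity), div_mul_eq_mul_div, add_div' _ _ _ (by positivity : c2v * c1v * (lamv + c1v) ≠ 0)]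
    field_simp
    ring
  · rw [hrel1, hA1, hA2]
    have e1 : 1 + ηh * α1 * lamh / ((ηh * σh * ξh - ω * α1) * lamh + ηh * σh * ξh)
        = ((ηh * σh * ξh + ηh * α1 - ω * α1) * lamh + ηh * σh * ξh)
          / ((ηh * σh * ξh - ω * α1) * lamh + ηh * σh * ξh) := by
      rw [add_div' _ _ _ hDne]; congr 1; ring
    rw [e1, mul_div_assoc', div_div_div_cancel_right₀ hDne]
    congr 1
    ring
end

section
/- Let α₁, α₂, b_{1h}, b_{1v}, σ_h, ξ_h, c_{1v}, c_{2v} be positive reals and set R₀² = α₁α₂b_{1h}b_{1v}/(σ_hξ_hc_{2v}c_{1v}²). Suppose R₀ ≤ 1 and let I_h ≥ 0 and I_v ≥ 0 be reals with I_h > 0 or I_v > 0. Then ξ_hσ_hc_{2v}c_{1v}²(R₀² − 1)·I_v − α₁α₂b_{1v}b_{1h}·I_v²/(1 + I_v) − ξ_hσ_hα₂b_{1v}·I_h²/(1 + I_h) < 0. -/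
/-- **Lyapunov derivative negativity at the DFE.** If `R₀ ≤ 1` and
`I_h, I_v ≥ 0` are not both zero, then the orbital derivative of the Lyapunov
function at the disease-free values is strictly negative. -/
theorem lyapunov_derivative_negative
    (α1 α2 b1h b1v σh ξh c1v c2v : ℝ)
    (hα1 : 0 < α1) (hα2 : 0 < α2) (hb1h : 0 < b1h) (hb1v : 0 < b1v)
    (hσ : 0 < σh) (hξ : 0 < ξh) (hc1 : 0 < c1v) (hc2 : 0 < c2v)
    (R0sq : ℝ)
    (hR0sq : R0sq = α1 * α2 * b1h * b1v / (σh * ξh * c2v * c1v ^ 2))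
    (hR0le : Real.sqrt R0sq ≤ 1)
    (Ih Iv : ℝ) (hIh : 0 ≤ Ih) (hIv : 0 ≤ Iv) (hne : 0 < Ih ∨ 0 < Iv) :
    ξh * σh * c2v * c1v ^ 2 * (R0sq - 1) * Iv
      - α1 * α2 * b1v * b1h * Iv ^ 2 / (1 + Iv)
      - ξh * σh * α2 * b1v * Ih ^ 2 / (1 + Ih) < 0 := by
  have hR0pos : 0 < R0sq := by
    rw [hR0sq]
    positivity
  have hR0le1 : R0sq ≤ 1 := by
    have := Real.sq_sqrt hR0pos.le
    nlinarith [Real.sqrt_nonneg R0sq]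
  have h1 : ξh * σh * c2v * c1v ^ 2 * (R0sq - 1) * Iv ≤ 0 := by
    have : 0 < ξh * σh * c2v * c1v ^ 2 := by positivity
    exact mul_nonpos_of_nonpos_of_nonneg (mul_nonpos_of_nonneg_of_nonpos this.le (by linarith)) hIv
  have hIv1 : (0:ℝ) < 1 + Iv := by linarith
  have hIh1 : (0:ℝ) < 1 + Ih := by linarith
  have h2 : 0 ≤ α1 * α2 * b1v * b1h * Iv ^ 2 / (1 + Iv) := by positivity
  have h3 : 0 ≤ ξh * σh * α2 * b1v * Ih ^ 2 / (1 + Ih) := by positivity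
  rcases hne with hpos | hpos
  · have : 0 < ξh * σh * α2 * b1v * Ih ^ 2 / (1 + Ih) := by positivity
    linarith
  · have : 0 < α1 * α2 * b1v * b1h * Iv ^ 2 / (1 + Iv) := by positivity
    linarith
end

section
/- Let λ ∈ ℂ, let τ_r, ω, f, h, α₁, α₂, σ_h, ξ_h, η_h, c_{1v}, c_{2v} be real numbers, and write E = e^{−λτ_r}. Let J be the 7×7 complex matrix with rows [−1, 0, 0, ω, 0, 0, −f], [0, −σ_h, 0, 0, 0, 0, α₁f], [0, 1, −ξ_hE, 0, 0, 0, 0], [0, 0, E, −η_h, 0, 0, 0], [0, 0, −h, 0, −c_{1v}, 0, 0], [0, 0, α₂h, 0, 0, −c_{2v}, 0], [0, 0, 0, 0, 0, 1, −c_{1v}]. Then det(λ·I₇ − J) = (λ + 1)(λ + η_h)(λ + c_{1v})·[(λ + c_{1v})(λ + c_{2v})(λ + σ_h)(λ + ξ_h e^{−λτ_r}) − α₁α₂fh]. -/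
set_option maxHeartbeats 1000000
set_option maxRecDepth 10000

/-- **characteristic determinant at the disease-free equilibrium.**
For the linearization matrix `J` of the delayed dengue model at the DFE with
`τ_h = τ_v = 0` and recovery delay `τ_r`, writing `E = e^{-λτ_r}`, one has
`det(λI₇ − J) = (λ+1)(λ+η_h)(λ+c_{1v})·[(λ+c_{1v})(λ+c_{2v})(λ+σ_h)(λ+ξ_h e^{-λτ_r}) − α₁α₂fh]`. -/
theorem dfe_characteristic_factorization
    (lam : ℂ) (τr ω f h α1 α2 σh ξh ηh c1v c2v : ℝ)
    (E : ℂ) (hE : E = Complex.exp (-lam * (τr : ℂ)))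
    (J : Matrix (Fin 7) (Fin 7) ℂ)
    (hJ : J = !![-1, 0, 0, (ω : ℂ), 0, 0, -(f : ℂ);
                 0, -(σh : ℂ), 0, 0, 0, 0, (α1 : ℂ) * (f : ℂ);
                 0, 1, -(ξh : ℂ) * E, 0, 0, 0, 0;
                 0, 0, E, -(ηh : ℂ), 0, 0, 0;
                 0, 0, -(h : ℂ), 0, -(c1v : ℂ), 0, 0;
                 0, 0, (α2 : ℂ) * (h : ℂ), 0, 0, -(c2v : ℂ), 0;
                 0, 0, 0, 0, 0, 1, -(c1v : ℂ)]) :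
    Matrix.det (lam • (1 : Matrix (Fin 7) (Fin 7) ℂ) - J) =
      (lam + 1) * (lam + (ηh : ℂ)) * (lam + (c1v : ℂ)) *
        ((lam + (c1v : ℂ)) * (lam + (c2v : ℂ)) * (lam + (σh : ℂ)) *
          (lam + (ξh : ℂ) * Complex.exp (-lam * (τr : ℂ)))
          - (α1 : ℂ) * (α2 : ℂ) * (f : ℂ) * (h : ℂ)) := by
  subst hJ
  set M7 : Matrix (Fin 7) (Fin 7) ℂ :=
    !![lam+1, 0, 0, -(ω : ℂ), 0, 0, (f : ℂ);
       0, lam+(σh : ℂ), 0, 0, 0, 0, -((α1 : ℂ) * (f : ℂ));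
       0, -1, lam+(ξh : ℂ) * E, 0, 0, 0, 0;
       0, 0, -E, lam+(ηh : ℂ), 0, 0, 0;
       0, 0, (h : ℂ), 0, lam+(c1v : ℂ), 0, 0;
       0, 0, -((α2 : ℂ) * (h : ℂ)), 0, 0, lam+(c2v : ℂ), 0;
       0, 0, 0, 0, 0, -1, lam+(c1v : ℂ)] with hM7
  set M6 : Matrix (Fin 6) (Fin 6) ℂ :=
    !![lam+(σh : ℂ), 0, 0, 0, 0, -((α1 : ℂ) * (f : ℂ));
       -1, lam+(ξh : ℂ) * E, 0, 0, 0, 0;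
       0, -E, lam+(ηh : ℂ), 0, 0, 0;
       0, (h : ℂ), 0, lam+(c1v : ℂ), 0, 0;
       0, -((α2 : ℂ) * (h : ℂ)), 0, 0, lam+(c2v : ℂ), 0;
       0, 0, 0, 0, -1, lam+(c1v : ℂ)] with hM6
  set M5 : Matrix (Fin 5) (Fin 5) ℂ :=
    !![lam+(σh : ℂ), 0, 0, 0, -((α1 : ℂ) * (f : ℂ));
       -1, lam+(ξh : ℂ) * E, 0, 0, 0;
       0, (h : ℂ), lam+(c1v : ℂ), 0, 0;
       0, -((α2 : ℂ) * (h : ℂ)), 0, lam+(c2v : ℂ), 0;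
       0, 0, 0, -1, lam+(c1v : ℂ)] with hM5
  set M4 : Matrix (Fin 4) (Fin 4) ℂ :=
    !![lam+(σh : ℂ), 0, 0, -((α1 : ℂ) * (f : ℂ));
       -1, lam+(ξh : ℂ) * E, 0, 0;
       0, -((α2 : ℂ) * (h : ℂ)), lam+(c2v : ℂ), 0;
       0, 0, -1, lam+(c1v : ℂ)] with hM4
  have hA : lam • (1 : Matrix (Fin 7) (Fin 7) ℂ) -
      !![-1, 0, 0, (ω : ℂ), 0, 0, -(f : ℂ);
         0, -(σh : ℂ), 0, 0, 0, 0, (α1 : ℂ) * (f : ℂ);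
         0, 1, -(ξh : ℂ) * E, 0, 0, 0, 0;
         0, 0, E, -(ηh : ℂ), 0, 0, 0;
         0, 0, -(h : ℂ), 0, -(c1v : ℂ), 0, 0;
         0, 0, (α2 : ℂ) * (h : ℂ), 0, 0, -(c2v : ℂ), 0;
         0, 0, 0, 0, 0, 1, -(c1v : ℂ)] = M7 := by
    rw [hM7]
    ext i j
    fin_cases i <;> fin_cases j <;>
      simp only [Matrix.sub_apply, Matrix.smul_apply, Matrix.one_apply, Fin.isValue] <;>
      norm_num [Matrix.cons_val_succ', Matrix.cons_val_zero, Matrix.cons_val_one,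
        Matrix.head_cons, Fin.ext_iff]
  rw [hA]
  have s7 : M7.det = (lam + 1) * M6.det := by
    have h76 : M7.submatrix (Fin.succAbove 0) (Fin.succAbove 0) = M6 := by
      ext i j; fin_cases i <;> fin_cases j <;> rfl
    rw [Matrix.det_succ_column_zero, Fin.sum_univ_succ, ← Fin.succAbove_zero, h76]
    simp [Fin.sum_univ_succ, hM7]
  have s6 : M6.det = (lam + (ηh : ℂ)) * M5.det := by
    have h65 : M6.submatrix (Fin.succAbove 2) (Fin.succAbove 2) = M5 := by
      ext i j; fin_cases i <;> fin_cases j <;> rfl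
    rw [Matrix.det_succ_column _ 2, Fin.sum_univ_succ, Fin.sum_univ_succ, Fin.sum_univ_succ]
    rw [hM6] at h65
    norm_num [h65, Fin.sum_univ_succ, hM6, Matrix.cons_val_two]
  have s5 : M5.det = (lam + (c1v : ℂ)) * M4.det := by
    have h54 : M5.submatrix (Fin.succAbove 2) (Fin.succAbove 2) = M4 := by
      ext i j; fin_cases i <;> fin_cases j <;> rfl
    rw [Matrix.det_succ_column _ 2, Fin.sum_univ_succ, Fin.sum_univ_succ, Fin.sum_univ_succ]
    rw [hM5] at h54
    norm_num [h54, Fin.sum_univ_succ, hM5, Matrix.cons_val_two]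
  have s4 : M4.det =
      (lam + (c1v : ℂ)) * (lam + (c2v : ℂ)) * (lam + (σh : ℂ)) * (lam + (ξh : ℂ) * E)
        - (α1 : ℂ) * (α2 : ℂ) * (f : ℂ) * (h : ℂ) := by
    simp [hM4, Matrix.det_succ_row_zero, Fin.sum_univ_succ, Fin.castSucc, Fin.castAdd,
      Fin.castLE, Fin.succAbove_of_castSucc_lt]
    ring
  rw [s7, s6, s5, s4, hE]
  ring
end

section
/- Let σ_h, ξ_h, c_{1v}, c_{2v} be positive reals, let K = α₁α₂b_{1h}b_{1v}/c_{1v} with α₁, α₂, b_{1h}, b_{1v} > 0, and set R₀² = K/(σ_hξ_hc_{2v}c_{1v}) = α₁α₂b_{1h}b_{1v}/(σ_hξ_hc_{2v}c_{1v}²). Consider the characteristic equation (λ + c_{1v})(λ + c_{2v})(λ + σ_h)(λ + ξ_h) − K = 0. (i) If R₀ < 1 then every complex root λ of this equation satisfies Re(λ) < 0. (ii) If R₀ > 1 then the equation has a real root λ > 0. -/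
/-- **local stability of the DFE in the non-delayed case.**
For the characteristic equation `(λ+c_{1v})(λ+c_{2v})(λ+σ_h)(λ+ξ_h) − K = 0` with
`K = α₁α₂b_{1h}b_{1v}/c_{1v}` and `R₀² = K/(σ_hξ_hc_{2v}c_{1v})`:
(i) if `R₀ < 1` every complex root has negative real part;
(ii) if `R₀ > 1` there is a real positive root. -/
theorem dfe_stability_nondelayed
    (α1 α2 b1h b1v σh ξh c1v c2v : ℝ)
    (hα1 : 0 < α1) (hα2 : 0 < α2) (hb1h : 0 < b1h) (hb1v : 0 < b1v)
    (hσ : 0 < σh) (hξ : 0 < ξh) (hc1 : 0 < c1v) (hc2 : 0 < c2v)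
    (K R0 : ℝ)
    (hK : K = α1 * α2 * b1h * b1v / c1v)
    (hR0 : R0 = Real.sqrt (K / (σh * ξh * c2v * c1v))) :
    (R0 < 1 → ∀ lam : ℂ,
      (lam + (c1v : ℂ)) * (lam + (c2v : ℂ)) * (lam + (σh : ℂ)) * (lam + (ξh : ℂ))
        - (K : ℂ) = 0 → lam.re < 0) ∧
    (1 < R0 → ∃ lam : ℝ, 0 < lam ∧
      (lam + c1v) * (lam + c2v) * (lam + σh) * (lam + ξh) - K = 0) := by
  have hprod : 0 < σh * ξh * c2v * c1v := by positivity
  have hKpos : 0 < K := by rw [hK]; positivity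
  have h0 : 0 ≤ K / (σh * ξh * c2v * c1v) := by positivity
  have hsq : Real.sqrt (K / (σh * ξh * c2v * c1v)) ^ 2 = K / (σh * ξh * c2v * c1v) :=
    Real.sq_sqrt h0
  have hsn : 0 ≤ Real.sqrt (K / (σh * ξh * c2v * c1v)) := Real.sqrt_nonneg _
  constructor
  · intro hR lam heq
    by_contra hre
    push_neg at hre
    have hx : K / (σh * ξh * c2v * c1v) < 1 := by
      rw [hR0] at hR; nlinarith
    have hKlt : K < c1v * c2v * σh * ξh := by
      have := (div_lt_one hprod).mp hx
      nlinarith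
    have key : ∀ a : ℝ, 0 < a → a ≤ ‖lam + a‖ := by
      intro a ha
      have h1 : (lam + (a : ℂ)).re = lam.re + a := by simp
      have h2 := Complex.re_le_norm (lam + a)
      rw [h1] at h2
      linarith
    have heq' : (lam + (c1v : ℂ)) * (lam + (c2v : ℂ)) * (lam + (σh : ℂ)) * (lam + (ξh : ℂ))
        = (K : ℂ) := by linear_combination heq
    have habs : ‖lam + c1v‖ * ‖lam + c2v‖ * ‖lam + σh‖
        * ‖lam + ξh‖ = K := by
      have := congrArg (‖·‖) heq'
      simpa [norm_mul, Complex.norm_real, abs_of_pos hKpos] using this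
    have hge : c1v * c2v * σh * ξh ≤ ‖lam + c1v‖ * ‖lam + c2v‖
        * ‖lam + σh‖ * ‖lam + ξh‖ := by
      gcongr <;> first
        | exact key _ hc1 | exact key _ hc2 | exact key _ hσ | exact key _ hξ
        | positivity
    linarith [habs ▸ hge]
  · intro hR
    have hx : 1 < K / (σh * ξh * c2v * c1v) := by
      rw [hR0] at hR; nlinarith
    have hKgt : σh * ξh * c2v * c1v < K := by
      rw [lt_div_iff₀ hprod] at hx; linarith
    set b : ℝ := (K + 1) / (c2v * σh * ξh) with hb
    have hbpos : 0 < b := by positivity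
    set f : ℝ → ℝ := fun x => (x + c1v) * (x + c2v) * (x + σh) * (x + ξh) - K with hf
    have hcont : ContinuousOn f (Set.Icc 0 b) := by fun_prop
    have hf0 : f 0 < 0 := by
      simp only [hf, zero_add]
      nlinarith
    have hfb : 0 < f b := by
      have hbig : b * c2v * σh * ξh ≤ (b + c1v) * (b + c2v) * (b + σh) * (b + ξh) := by
        gcongr <;> linarith
      have hbe : b * c2v * σh * ξh = K + 1 := by
        rw [hb]; field_simp
      simp only [hf]
      nlinarith
    have hsub := intermediate_value_Icc hbpos.le hcont
    have hmem : (0 : ℝ) ∈ Set.Icc (f 0) (f b) := ⟨hf0.le, hfb.le⟩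
    obtain ⟨x, hxmem, hxeq⟩ := hsub hmem
    refine ⟨x, ?_, hxeq⟩
    rcases lt_or_eq_of_le hxmem.1 with h | h
    · exact h
    · exfalso; rw [← h] at hxeq; rw [hxeq] at hf0; exact lt_irrefl 0 hf0
end

section
/- Let c_{1v}, c_{2v}, σ_h, ξ_h, α₁, α₂, f, h > 0 be reals, τ_r ∈ ℝ, and define d₁ = c_{1v} + c_{2v} + σ_h, d₂ = c_{1v}c_{2v} + c_{1v}σ_h + c_{2v}σ_h, d₃ = c_{1v}c_{2v}σ_h, K = fhα₁α₂. Suppose μ ∈ ℝ satisfies, in ℂ, ((iμ)³ + d₁(iμ)² + d₂(iμ) + d₃)·(iμ + ξ_h e^{−iμτ_r}) − K = 0. Then μ⁸ + (d₁² − 2d₂ − ξ_h²)μ⁶ + (−2d₁d₃ + d₂² + 2ξ_h²d₂ − ξ_h²d₁² − 2K)μ⁴ + (d₃² − ξ_h²d₂² + 2ξ_h²d₁d₃ + 2d₂K)μ² + K² − d₃²ξ_h² = 0. -/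
/-- **reduction to the octic.** If `λ = iμ` is a purely imaginary root of
the transcendental characteristic equation
`(λ³ + d₁λ² + d₂λ + d₃)(λ + ξ_h e^{-λτ_r}) − K = 0`, then `μ` satisfies the displayed
eighth-order real polynomial equation. -/
theorem imaginary_root_octic
    (c1v c2v σh ξh α1 α2 f h : ℝ)
    (hc1 : 0 < c1v) (hc2 : 0 < c2v) (hσ : 0 < σh) (hξ : 0 < ξh)
    (hα1 : 0 < α1) (hα2 : 0 < α2) (hf : 0 < f) (hh : 0 < h)
    (τr : ℝ)
    (d1 d2 d3 K : ℝ)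
    (hd1 : d1 = c1v + c2v + σh)
    (hd2 : d2 = c1v * c2v + c1v * σh + c2v * σh)
    (hd3 : d3 = c1v * c2v * σh)
    (hK : K = f * h * α1 * α2)
    (μ : ℝ)
    (hroot : ((Complex.I * μ) ^ 3 + (d1 : ℂ) * (Complex.I * μ) ^ 2
        + (d2 : ℂ) * (Complex.I * μ) + (d3 : ℂ)) *
        (Complex.I * μ + (ξh : ℂ) * Complex.exp (-(Complex.I * μ) * (τr : ℂ)))
        - (K : ℂ) = 0) :
    μ ^ 8 + (d1 ^ 2 - 2 * d2 - ξh ^ 2) * μ ^ 6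
      + (-2 * d1 * d3 + d2 ^ 2 + 2 * ξh ^ 2 * d2 - ξh ^ 2 * d1 ^ 2 - 2 * K) * μ ^ 4
      + (d3 ^ 2 - ξh ^ 2 * d2 ^ 2 + 2 * ξh ^ 2 * d1 * d3 + 2 * d2 * K) * μ ^ 2
      + K ^ 2 - d3 ^ 2 * ξh ^ 2 = 0 := by
  set P : ℂ := (Complex.I * μ) ^ 3 + (d1 : ℂ) * (Complex.I * μ) ^ 2
        + (d2 : ℂ) * (Complex.I * μ) + (d3 : ℂ) with hP
  set E : ℂ := Complex.exp (-(Complex.I * μ) * (τr : ℂ)) with hEdef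
  have hE : ‖E‖ = 1 := by
    rw [hEdef, Complex.norm_exp]
    simp
  have key : (ξh : ℂ) * P * E = (K : ℂ) - Complex.I * μ * P := by
    linear_combination hroot
  have h2 : Complex.normSq ((ξh : ℂ) * P * E)
      = Complex.normSq ((K : ℂ) - Complex.I * μ * P) := by rw [key]
  rw [map_mul, map_mul, Complex.normSq_eq_norm_sq E, hE] at h2
  have hPre : P.re = d3 - d1 * μ ^ 2 := by
    simp [hP, Complex.add_re, Complex.mul_re, Complex.mul_im, pow_succ]
    ring
  have hPim : P.im = d2 * μ - μ ^ 3 := by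
    simp [hP, Complex.add_im, Complex.mul_re, Complex.mul_im, pow_succ]
    ring
  have h3 : Complex.normSq P = (d3 - d1 * μ ^ 2) ^ 2 + (d2 * μ - μ ^ 3) ^ 2 := by
    rw [Complex.normSq_apply, hPre, hPim]; ring
  have h4 : Complex.normSq ((K : ℂ) - Complex.I * μ * P)
      = (K + μ * (d2 * μ - μ ^ 3)) ^ 2 + (μ * (d3 - d1 * μ ^ 2)) ^ 2 := by
    rw [Complex.normSq_apply]
    simp [Complex.sub_re, Complex.sub_im, Complex.mul_re, Complex.mul_im, hPre, hPim]
    ring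
  rw [h3, h4, Complex.normSq_ofReal] at h2
  linear_combination -h2
end

section
/- Let D₁, D₂, D₃, D₄ ∈ ℝ with D₄ ≥ 0 and consider f(ν) = ν⁴ + D₁ν³ + D₂ν² + D₃ν + D₄. Define e₁ = (8D₂ − 3D₁²)/16, e₂ = (D₁³ − 4D₁D₂ + 8D₃)/32, and Δ̂ = (e₁/3)³ + (e₂/2)². Assume Δ̂ ≥ 0 and set ν₁ = (−e₂/2 + √Δ̂)^{1/3} + (−e₂/2 − √Δ̂)^{1/3} − D₁/4, using real cube roots. Then f has a positive real root if and only if ν₁ > 0 and f(ν₁) ≤ 0. -/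
/-- The real cube root of a real number. -/
noncomputable def realCbrt (x : ℝ) : ℝ :=
  if 0 ≤ x then x ^ ((1 : ℝ) / 3) else -((-x) ^ ((1 : ℝ) / 3))

lemma realCbrt_cube (x : ℝ) : realCbrt x ^ 3 = x := by
  unfold realCbrt
  split_ifs with h
  · rw [← Real.rpow_natCast (x ^ ((1 : ℝ) / 3)) 3, ← Real.rpow_mul h]
    norm_num
  · push_neg at h
    have h' : (0 : ℝ) ≤ -x := by linarith
    have key : ((-x) ^ ((1 : ℝ) / 3)) ^ 3 = -x := by
      rw [← Real.rpow_natCast ((-x) ^ ((1 : ℝ) / 3)) 3, ← Real.rpow_mul h']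
      norm_num
    have h2 : (-((-x) ^ ((1 : ℝ) / 3))) ^ 3 = -(((-x) ^ ((1 : ℝ) / 3)) ^ 3) := by ring
    rw [h2, key, neg_neg]

lemma cube_inj {a b : ℝ} (h : a ^ 3 = b ^ 3) : a = b :=
  (Odd.strictMono_pow (R := ℝ) ⟨1, by norm_num⟩).injective h

/-- **condition C₂.** With `D₄ ≥ 0` and Cardano discriminant `Δ̂ ≥ 0`,
the quartic `f(ν) = ν⁴ + D₁ν³ + D₂ν² + D₃ν + D₄` has a positive real root if and only
if `ν₁ > 0` and `f(ν₁) ≤ 0`, where `ν₁` is the real critical point given by Cardano's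
formula with real cube roots. -/
theorem quartic_positive_root_C2
    (D1 D2 D3 D4 : ℝ) (hD4 : 0 ≤ D4)
    (e1 e2 Δ ν1 : ℝ)
    (he1 : e1 = (8 * D2 - 3 * D1 ^ 2) / 16)
    (he2 : e2 = (D1 ^ 3 - 4 * D1 * D2 + 8 * D3) / 32)
    (hΔ : Δ = (e1 / 3) ^ 3 + (e2 / 2) ^ 2)
    (hΔpos : 0 ≤ Δ)
    (hν1 : ν1 = realCbrt (-e2 / 2 + Real.sqrt Δ) + realCbrt (-e2 / 2 - Real.sqrt Δ)
      - D1 / 4) :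
    (∃ ν : ℝ, 0 < ν ∧ ν ^ 4 + D1 * ν ^ 3 + D2 * ν ^ 2 + D3 * ν + D4 = 0) ↔
    (0 < ν1 ∧ ν1 ^ 4 + D1 * ν1 ^ 3 + D2 * ν1 ^ 2 + D3 * ν1 + D4 ≤ 0) := by
  set F : ℝ → ℝ := fun x => x ^ 4 + D1 * x ^ 3 + D2 * x ^ 2 + D3 * x + D4 with hFdef
  have hs : Real.sqrt Δ ^ 2 = Δ := Real.sq_sqrt hΔpos
  set u := realCbrt (-e2 / 2 + Real.sqrt Δ) with hudef
  set v := realCbrt (-e2 / 2 - Real.sqrt Δ) with hvdef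
  have hu : u ^ 3 = -e2 / 2 + Real.sqrt Δ := realCbrt_cube _
  have hv : v ^ 3 = -e2 / 2 - Real.sqrt Δ := realCbrt_cube _
  have huv : u * v = -e1 / 3 := by
    apply cube_inj
    have h3 : (u * v) ^ 3 = u ^ 3 * v ^ 3 := by ring
    rw [h3, hu, hv]
    linear_combination -hΔ - hs
  have hy1 : ν1 + D1 / 4 = u + v := by rw [hν1]; ring
  have hcubic : (ν1 + D1 / 4) ^ 3 + e1 * (ν1 + D1 / 4) + e2 = 0 := by
    rw [hy1]
    linear_combination hu + hv + (3 * (u + v)) * huv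
  have key : ∀ w : ℝ, 4 * (w - (ν1 + D1 / 4)) *
      (w ^ 2 + (ν1 + D1 / 4) * w + (ν1 + D1 / 4) ^ 2 + e1) =
      4 * w ^ 3 + 4 * e1 * w + 4 * e2 := by
    intro w
    linear_combination (-4 : ℝ) * hcubic
  -- factorization of the derivative
  have hfact : ∀ x : ℝ, 4 * x ^ 3 + 3 * D1 * x ^ 2 + 2 * D2 * x + D3 =
      4 * (x - ν1) * ((x + D1 / 4 + (ν1 + D1 / 4) / 2) ^ 2 + 3 * (u - v) ^ 2 / 4) := by
    intro x
    have hsq : 3 * (u - v) ^ 2 / 4 = 3 * (ν1 + D1 / 4) ^ 2 / 4 + e1 := by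
      have h4 : (u - v) ^ 2 = (u + v) ^ 2 - 4 * (u * v) := by ring
      rw [h4, ← hy1, huv]; ring
    rw [hsq]
    linear_combination -(key (x + D1 / 4)) - (4 * x + D1) * he1 - 4 * he2
  -- derivative of F
  have hF' : ∀ x : ℝ, HasDerivAt F (4 * x ^ 3 + 3 * D1 * x ^ 2 + 2 * D2 * x + D3) x := by
    intro x
    have h1 : HasDerivAt (fun y : ℝ => y ^ 4) (4 * x ^ 3) x := by
      simpa using hasDerivAt_pow 4 x
    have h2 : HasDerivAt (fun y : ℝ => D1 * y ^ 3) (D1 * (3 * x ^ 2)) x := by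
      simpa using (hasDerivAt_pow 3 x).const_mul D1
    have h3 : HasDerivAt (fun y : ℝ => D2 * y ^ 2) (D2 * (2 * x)) x := by
      simpa using (hasDerivAt_pow 2 x).const_mul D2
    have h4 : HasDerivAt (fun y : ℝ => D3 * y) D3 x := by
      simpa using (hasDerivAt_id x).const_mul D3
    have h := (((h1.add h2).add h3).add h4).add_const D4
    rw [show 4 * x ^ 3 + 3 * D1 * x ^ 2 + 2 * D2 * x + D3 =
      4 * x ^ 3 + D1 * (3 * x ^ 2) + D2 * (2 * x) + D3 by ring]
    exact h
  have hcont : Continuous F :=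
    Differentiable.continuous fun x => (hF' x).differentiableAt
  have hderiv : ∀ x : ℝ, deriv F x = 4 * x ^ 3 + 3 * D1 * x ^ 2 + 2 * D2 * x + D3 :=
    fun x => (hF' x).deriv
  have hQ : ∀ x : ℝ, 0 ≤ (x + D1 / 4 + (ν1 + D1 / 4) / 2) ^ 2 + 3 * (u - v) ^ 2 / 4 := by
    intro x; positivity
  have hmono : MonotoneOn F (Set.Ici ν1) := by
    apply monotoneOn_of_deriv_nonneg (convex_Ici _) hcont.continuousOn
      (fun x _ => (hF' x).differentiableAt.differentiableWithinAt)
    intro x hx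
    rw [interior_Ici] at hx
    have hx' : ν1 < x := hx
    rw [hderiv, hfact]
    exact mul_nonneg (by linarith) (hQ x)
  have hanti : AntitoneOn F (Set.Iic ν1) := by
    apply antitoneOn_of_deriv_nonpos (convex_Iic _) hcont.continuousOn
      (fun x _ => (hF' x).differentiableAt.differentiableWithinAt)
    intro x hx
    rw [interior_Iic] at hx
    have hx' : x < ν1 := hx
    rw [hderiv, hfact]
    exact mul_nonpos_of_nonpos_of_nonneg (by linarith) (hQ x)
  constructor
  · rintro ⟨ν, hνpos, hνroot⟩
    have hroot : F ν = 0 := hνroot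
    have hmin : F ν1 ≤ 0 := by
      rcases le_total ν1 ν with h | h
      · calc F ν1 ≤ F ν := hmono Set.self_mem_Ici h h
          _ = 0 := hroot
      · calc F ν1 ≤ F ν := hanti h Set.self_mem_Iic h
          _ = 0 := hroot
    refine ⟨?_, hmin⟩
    by_contra hc
    push_neg at hc
    have hmem : ∀ t : ℝ, 0 ≤ t → t ∈ Set.Ici ν1 := fun t ht => le_trans hc ht
    have hF0le : F 0 ≤ F ν := hmono (hmem 0 le_rfl) (hmem ν hνpos.le) hνpos.le
    have hF0 : F 0 = 0 := by
      have hD : F 0 = D4 := by norm_num [hFdef]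
      rw [hroot] at hF0le
      rw [hD] at hF0le ⊢
      linarith
    have hzero : ∀ t : ℝ, 0 ≤ t → t ≤ ν → F t = 0 := by
      intro t ht0 htν
      have h1 : F 0 ≤ F t := hmono (hmem 0 le_rfl) (hmem t ht0) ht0
      have h2 : F t ≤ F ν := hmono (hmem t ht0) (hmem ν hνpos.le) htν
      rw [hF0] at h1; rw [hroot] at h2; linarith
    have q1 : (ν/4) ^ 4 + D1 * (ν/4) ^ 3 + D2 * (ν/4) ^ 2 + D3 * (ν/4) + D4 = 0 :=
      hzero _ (by linarith) (by linarith)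
    have q2 : (ν/2) ^ 4 + D1 * (ν/2) ^ 3 + D2 * (ν/2) ^ 2 + D3 * (ν/2) + D4 = 0 :=
      hzero _ (by linarith) (by linarith)
    have q3 : (3*ν/4) ^ 4 + D1 * (3*ν/4) ^ 3 + D2 * (3*ν/4) ^ 2 + D3 * (3*ν/4) + D4 = 0 :=
      hzero _ (by linarith) (by linarith)
    have hF0' : (0:ℝ) ^ 4 + D1 * 0 ^ 3 + D2 * 0 ^ 2 + D3 * 0 + D4 = 0 := hF0
    have hν4 : ν ^ 4 = 0 := by
      linear_combination (32/3 : ℝ) * hF0' - (128/3 : ℝ) * q1 + (64 : ℝ) * q2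
        - (128/3 : ℝ) * q3 + (32/3 : ℝ) * hνroot
    have hpos4 : (0:ℝ) < ν ^ 4 := by positivity
    linarith
  · rintro ⟨hν1pos, hν1le⟩
    set C : ℝ := |D1| + |D2| + |D3| + |D4| with hCdef
    set M : ℝ := max ν1 (1 + C) with hMdef
    have hC0 : 0 ≤ C := by positivity
    have hM1 : ν1 ≤ M := le_max_left _ _
    have hMC : 1 + C ≤ M := le_max_right _ _
    have h1M : (1 : ℝ) ≤ M := by linarith
    have hM0 : (0 : ℝ) ≤ M := by linarith
    have hM3' : 0 ≤ M ^ 3 := by positivity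
    have w2 : 0 ≤ M ^ 3 - M ^ 2 := by
      have h := mul_nonneg (sq_nonneg M) (show (0:ℝ) ≤ M - 1 by linarith)
      linarith
    have w1 : 0 ≤ M ^ 2 - 1 := by
      have h := mul_nonneg (show (0:ℝ) ≤ M - 1 by linarith) (show (0:ℝ) ≤ M + 1 by linarith)
      linarith
    have w3 : 0 ≤ M ^ 3 - M := by
      have h := mul_nonneg hM0 w1
      linarith
    have w4 : 0 ≤ M ^ 3 - 1 := by
      have hq : (0:ℝ) ≤ M ^ 2 + M + 1 := by linarith [sq_nonneg M]
      have h := mul_nonneg (show (0:ℝ) ≤ M - 1 by linarith) hq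
      linarith
    have t1 : 0 ≤ (D1 + |D1|) * M ^ 3 := mul_nonneg (by linarith [neg_abs_le D1]) hM3'
    have t2 : 0 ≤ (D2 + |D2|) * M ^ 2 := mul_nonneg (by linarith [neg_abs_le D2]) (by positivity)
    have t3 : 0 ≤ (D3 + |D3|) * M := mul_nonneg (by linarith [neg_abs_le D3]) hM0
    have t4 : 0 ≤ D4 + |D4| := by linarith [neg_abs_le D4]
    have p2 : 0 ≤ |D2| * (M ^ 3 - M ^ 2) := mul_nonneg (abs_nonneg D2) w2
    have p3 : 0 ≤ |D3| * (M ^ 3 - M) := mul_nonneg (abs_nonneg D3) w3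
    have p4 : 0 ≤ |D4| * (M ^ 3 - 1) := mul_nonneg (abs_nonneg D4) w4
    have s1 : 0 ≤ M ^ 3 * (M - 1 - C) := mul_nonneg hM3' (by linarith)
    have hFM : 0 < F M := by
      show 0 < M ^ 4 + D1 * M ^ 3 + D2 * M ^ 2 + D3 * M + D4
      have hid : M ^ 4 + D1 * M ^ 3 + D2 * M ^ 2 + D3 * M + D4 =
          (D1 + |D1|) * M ^ 3 + (D2 + |D2|) * M ^ 2 + (D3 + |D3|) * M + (D4 + |D4|)
          + |D2| * (M ^ 3 - M ^ 2) + |D3| * (M ^ 3 - M) + |D4| * (M ^ 3 - 1)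
          + M ^ 3 * (M - 1 - C) + M ^ 3 := by
        rw [hCdef]; ring
      rw [hid]
      linarith
    have hiv := intermediate_value_Icc hM1 hcont.continuousOn
    have h0mem : (0 : ℝ) ∈ Set.Icc (F ν1) (F M) := ⟨hν1le, hFM.le⟩
    obtain ⟨ν, hνmem, hνeq⟩ := hiv h0mem
    exact ⟨ν, lt_of_lt_of_le hν1pos hνmem.1, hνeq⟩
end
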